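/- arXiv:2203.04953 — 4 statements merged into one kernel-verified Lean document; each statement's English description precedes it below -/
import Mathlib

section
/- If G is a disconnected finite simple graph, then G is a minimal unipolar obstruction if and only if G is isomorphic to 2P_3 (the disjoint union of two paths on three vertices). -/
open SimpleGraph

universe u v

/-! ### Basic predicates -/

/-- `B` induces a disjoint union of complete graphs in `G` (i.e. `G[B]` is a cluster). -/
def IsClusterSet {V : Type*} (G : SimpleGraph V) (B : Set V) : Prop :=
  ∀ ⦃u w x : V⦄, u ∈ B → w ∈ B → x ∈ B → G.Adj u w → G.Adj w x → u ≠ x → G.Adj u x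

/-- `A` induces a complete multipartite graph in `G`
(the complement of `G[A]` is a disjoint union of cliques). -/
def IsCompleteMultipartiteSet {V : Type*} (G : SimpleGraph V) (A : Set V) : Prop :=
  ∀ ⦃u w x : V⦄, u ∈ A → w ∈ A → x ∈ A → u ≠ w → w ≠ x → u ≠ x →
    ¬ G.Adj u w → ¬ G.Adj w x → ¬ G.Adj u x

/-- `A` is an independent set of `G`. -/
def IsIndepSet {V : Type*} (G : SimpleGraph V) (A : Set V) : Prop :=
  ∀ ⦃u w : V⦄, u ∈ A → w ∈ A → ¬ G.Adj u w

/-- `G[B]` is a disjoint union of at most `k` complete graphs. -/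
def IsClusterSetLE {V : Type*} (G : SimpleGraph V) (k : ℕ) (B : Set V) : Prop :=
  ∃ g : B → Fin k, ∀ u w : B, u ≠ w → (G.Adj u w ↔ g u = g w)

/-- `G[A]` is a complete multipartite graph with at most `s` parts. -/
def IsCompleteMultipartiteSetLE {V : Type*} (G : SimpleGraph V) (s : ℕ) (A : Set V) : Prop :=
  ∃ f : A → Fin s, ∀ u w : A, G.Adj u w ↔ f u ≠ f w

/-! ### Polarity properties -/

/-- `G` is unipolar: a partition `(A, Aᶜ)` with `A` a clique and `G[Aᶜ]` a cluster. -/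
def Unipolar {V : Type*} (G : SimpleGraph V) : Prop :=
  ∃ A : Set V, G.IsClique A ∧ IsClusterSet G Aᶜ

/-- `G` is monopolar ((1,∞)-polar). -/
def Monopolar {V : Type*} (G : SimpleGraph V) : Prop :=
  ∃ A : Set V, _root_.IsIndepSet G A ∧ IsClusterSet G Aᶜ

/-- `G` is polar ((∞,∞)-polar). -/
def Polar {V : Type*} (G : SimpleGraph V) : Prop :=
  ∃ A : Set V, IsCompleteMultipartiteSet G A ∧ IsClusterSet G Aᶜ

/-- `G` is (s,1)-polar. -/
def SOnePolar {V : Type*} (s : ℕ) (G : SimpleGraph V) : Prop :=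
  ∃ A : Set V, IsCompleteMultipartiteSetLE G s A ∧ G.IsClique Aᶜ

/-- `G` is (∞,1)-polar. -/
def InfOnePolar {V : Type*} (G : SimpleGraph V) : Prop :=
  ∃ A : Set V, IsCompleteMultipartiteSet G A ∧ G.IsClique Aᶜ

/-- `G` is (1,k)-polar. -/
def OneKPolar {V : Type*} (k : ℕ) (G : SimpleGraph V) : Prop :=
  ∃ A : Set V, _root_.IsIndepSet G A ∧ IsClusterSetLE G k Aᶜ

/-! ### Minimal obstructions -/

def MinUnipolarObstruction {V : Type*} (G : SimpleGraph V) : Prop :=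
  ¬ Unipolar G ∧ ∀ s : Set V, s ≠ Set.univ → Unipolar (G.induce s)

def MinMonopolarObstruction {V : Type*} (G : SimpleGraph V) : Prop :=
  ¬ Monopolar G ∧ ∀ s : Set V, s ≠ Set.univ → Monopolar (G.induce s)

def MinPolarObstruction {V : Type*} (G : SimpleGraph V) : Prop :=
  ¬ Polar G ∧ ∀ s : Set V, s ≠ Set.univ → Polar (G.induce s)

def MinSOnePolarObstruction {V : Type*} (s : ℕ) (G : SimpleGraph V) : Prop :=
  ¬ SOnePolar s G ∧ ∀ t : Set V, t ≠ Set.univ → SOnePolar s (G.induce t)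

def MinInfOnePolarObstruction {V : Type*} (G : SimpleGraph V) : Prop :=
  ¬ InfOnePolar G ∧ ∀ t : Set V, t ≠ Set.univ → InfOnePolar (G.induce t)

def MinOneKPolarObstruction {V : Type*} (k : ℕ) (G : SimpleGraph V) : Prop :=
  ¬ OneKPolar k G ∧ ∀ t : Set V, t ≠ Set.univ → OneKPolar k (G.induce t)

/-! ### Graph constructions -/

/-- The join of two graphs: all edges added between the summands. -/
def joinG {α β : Type*} (G : SimpleGraph α) (H : SimpleGraph β) : SimpleGraph (α ⊕ β) where
  Adj x y := (G ⊕g H).Adj x y ∨ (x.isLeft ∧ y.isRight) ∨ (x.isRight ∧ y.isLeft)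
  symm := ⟨fun x y h => by
    rcases h with h | ⟨h1, h2⟩ | ⟨h1, h2⟩
    · exact Or.inl ((G ⊕g H).symm.symm _ _ h)
    · exact Or.inr (Or.inr ⟨h2, h1⟩)
    · exact Or.inr (Or.inl ⟨h2, h1⟩)⟩
  loopless := ⟨fun x h => by
    rcases h with h | ⟨h1, h2⟩ | ⟨h1, h2⟩
    · exact (G ⊕g H).loopless.irrefl x h
    · cases x <;> simp_all
    · cases x <;> simp_all⟩

/-- `K_n`, the complete graph on `n` vertices. -/
def KG (n : ℕ) : SimpleGraph (Fin n) := ⊤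

/-- `n K_1`, the edgeless graph on `n` vertices. -/
def EG (n : ℕ) : SimpleGraph (Fin n) := ⊥

/-- The banner graph `P`: a four-cycle `0 1 2 3` with a pendant vertex `4` adjacent to `0`. -/
def banner : SimpleGraph (Fin 5) :=
  SimpleGraph.fromEdgeSet {s(0, 1), s(1, 2), s(2, 3), s(3, 0), s(0, 4)}

/-- The chair (fork) graph `F`: a path `0 1 2 3` with an extra vertex `4` adjacent to `1`. -/
def chair : SimpleGraph (Fin 5) :=
  SimpleGraph.fromEdgeSet {s(0, 1), s(1, 2), s(2, 3), s(1, 4)}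

/-- `2P_3`. -/
def twoP3 : SimpleGraph (Fin 3 ⊕ Fin 3) := pathGraph 3 ⊕g pathGraph 3

/-- `K_{2,3}`. -/
def K23 : SimpleGraph (Fin 2 ⊕ Fin 3) := completeBipartiteGraph (Fin 2) (Fin 3)

/-- The seven graphs `E1, E2, E3, E7, E10, E11, E12`. -/
def E1 : SimpleGraph (Fin 1 ⊕ (Fin 2 ⊕ Fin 2)) := KG 1 ⊕g (KG 2 ⊕g KG 2)
def E2 : SimpleGraph (Fin 3 ⊕ Fin 3) := pathGraph 3 ⊕g pathGraph 3
def E3 : SimpleGraph (Fin 4 ⊕ Fin 2) := cycleGraph 4 ⊕g EG 2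
def E7 : SimpleGraph (Fin 1 ⊕ (Fin 3 ⊕ Fin 2)) := KG 1 ⊕g (pathGraph 3 ⊕g KG 2)ᶜ
def E10 : SimpleGraph (Fin 1 ⊕ Fin 5) := KG 1 ⊕g cycleGraph 5
def E11 : SimpleGraph (Fin 1 ⊕ Fin 5) := KG 1 ⊕g banner
def E12 : SimpleGraph (Fin 1 ⊕ Fin 5) := KG 1 ⊕g (pathGraph 5)ᶜ

/-! ### P4 structure -/

/-- `W` induces a path on four vertices in `G`. -/
def InducesP4 {V : Type*} (G : SimpleGraph V) (W : Set V) : Prop :=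
  Nonempty (G.induce W ≃g pathGraph 4)

/-- A graph is a cograph if it has no induced `P_4`. -/
def Cograph {V : Type*} (G : SimpleGraph V) : Prop :=
  ∀ W : Set V, ¬ InducesP4 G W

/-- `G` is `P_4`-sparse: any five vertices induce at most one `P_4`. -/
def P4Sparse {V : Type*} (G : SimpleGraph V) : Prop :=
  ∀ s : Set V, s.ncard = 5 → ∀ W₁ W₂ : Set V, W₁ ⊆ s → W₂ ⊆ s →
    InducesP4 G W₁ → InducesP4 G W₂ → W₁ = W₂

/-- `G` is `P_4`-extendible. -/
def P4Extendible {V : Type*} (G : SimpleGraph V) : Prop :=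
  ∀ W : Set V, InducesP4 G W →
    ∀ v₁ v₂ : V, v₁ ∉ W → v₂ ∉ W →
      (∃ W₁ : Set V, InducesP4 G W₁ ∧ v₁ ∈ W₁ ∧ (W₁ ∩ W).Nonempty) →
      (∃ W₂ : Set V, InducesP4 G W₂ ∧ v₂ ∈ W₂ ∧ (W₂ ∩ W).Nonempty) → v₁ = v₂

/-! ### Spiders -/

/-- `(S, K, R)` is a spider partition of `G`. -/
def IsSpiderPartition {V : Type*} (G : SimpleGraph V) (S K R : Set V) : Prop :=
  S ∪ K ∪ R = Set.univ ∧ Disjoint S K ∧ Disjoint S R ∧ Disjoint K R ∧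
  S.ncard = K.ncard ∧ 2 ≤ K.ncard ∧
  G.IsClique K ∧ _root_.IsIndepSet G S ∧
  (∃ f : S → K, Function.Bijective f ∧
    ((∀ s : S, ∀ k : K, G.Adj s k ↔ (f s : V) = k) ∨
     (∀ s : S, ∀ k : K, G.Adj s k ↔ (f s : V) ≠ k))) ∧
  (∀ r ∈ R, ∀ k ∈ K, G.Adj r k) ∧
  (∀ r ∈ R, ∀ s ∈ S, ¬ G.Adj r s)

/-- `G` is a `B`-spider with partition `(S, K, R)`, where `B` is a fixed base graph with
midpoint set `M` and endpoint set `E`: `G` is obtained from a copy of `B` (whose midpoints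
form `K` and whose endpoints form `S`) by adding the set `R` of vertices, each adjacent to
all midpoints and to no endpoint. -/
def IsBaseSpider {n : ℕ} {V : Type*} (B : SimpleGraph (Fin n)) (M E : Set (Fin n))
    (G : SimpleGraph V) (S K R : Set V) : Prop :=
  ∃ f : Fin n → V, Function.Injective f ∧
    (∀ i j : Fin n, G.Adj (f i) (f j) ↔ B.Adj i j) ∧
    K = f '' M ∧ S = f '' E ∧ R = (Set.range f)ᶜ ∧
    (∀ r ∈ R, ∀ x ∈ K, G.Adj r x) ∧
    (∀ r ∈ R, ∀ x ∈ S, ¬ G.Adj r x)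


/-!
Unipolarity passes to induced subgraphs. `2P₃` is not unipolar: a clique lies inside one
component, so the other component keeps an induced `P₃` outside the clique. Deleting a vertex of
`2P₃` makes it unipolar, the clique being the centre of the path that is left intact.

Conversely, let `G` be a disconnected minimal obstruction. It is not a cluster, so it has an
induced `P₃`; let `C` be the component of its centre. `G[C]` is unipolar by minimality, and a
unipolar partition of `G[C]` extends to one of `G` unless `G - C` contains an induced `P₃`. That
`P₃` and the first one span an induced `2P₃`, which by minimality is all of `G`.
-/

namespace SimpleGraph

def Embedding.sumElim {V V₁ V₂ : Type*} {G : SimpleGraph V} {G₁ : SimpleGraph V₁}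
    {G₂ : SimpleGraph V₂} (f : G₁ ↪g G) (g : G₂ ↪g G)
    (hfg : ∀ u v, ¬ G.Reachable (f u) (g v)) : G₁ ⊕g G₂ ↪g G where
  toFun := Sum.elim f g
  inj' := by
    rintro (u | u) (v | v) huv <;> simp only [Sum.elim_inl, Sum.elim_inr] at huv
    · exact congrArg Sum.inl (f.injective huv)
    · exact (hfg u v (huv ▸ .rfl)).elim
    · exact (hfg v u (huv ▸ .rfl)).elim
    · exact congrArg Sum.inr (g.injective huv)
  map_rel_iff' := by
    rintro (u | u) (v | v)
    · exact f.map_adj_iff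
    · exact iff_of_false (fun h => hfg u v h.reachable) (not_adj_sum_inl_inr u v)
    · exact iff_of_false (fun h => hfg v u h.symm.reachable)
        fun h => not_adj_sum_inl_inr v u h.symm
    · exact g.map_adj_iff

end SimpleGraph

section Unipolar

variable {V W : Type*} {G : SimpleGraph V} {H : SimpleGraph W}

theorem isClusterSet_iff_forall_pathGraph_embedding {B : Set V} :
    IsClusterSet G B ↔ ∀ p : pathGraph 3 ↪g G, ¬ Set.range p ⊆ B := by
  constructor
  · intro hB p hp
    have h02 := hB (hp ⟨0, rfl⟩) (hp ⟨1, rfl⟩) (hp ⟨2, rfl⟩)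
      (p.map_adj_iff.mpr (by simp [pathGraph_adj])) (p.map_adj_iff.mpr (by simp [pathGraph_adj]))
      (p.injective.ne (by decide))
    exact absurd (p.map_adj_iff.mp h02) (by simp [pathGraph_adj])
  · intro h u w x hu hw hx huw hwx hux
    by_contra hnux
    let p : pathGraph 3 ↪g G :=
      { toFun := ![u, w, x]
        inj' := by
          intro i j hij
          fin_cases i <;> fin_cases j <;> simp_all [huw.ne, hwx.ne, huw.ne', hwx.ne']
        map_rel_iff' := by
          intro i j
          change G.Adj (![u, w, x] i) (![u, w, x] j) ↔ (pathGraph 3).Adj i j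
          fin_cases i <;> fin_cases j <;> simp [pathGraph_adj, huw, hwx, huw.symm, hwx.symm, hnux,
            G.adj_comm x u] }
    refine h p (Set.range_subset_iff.mpr fun i => ?_)
    fin_cases i
    exacts [hu, hw, hx]

theorem Unipolar.of_embedding (f : H ↪g G) (hG : Unipolar G) : Unipolar H := by
  obtain ⟨A, hA, hB⟩ := hG
  refine ⟨f ⁻¹' A, fun u hu v hv huv => f.map_adj_iff.mp (hA hu hv (f.injective.ne huv)), ?_⟩
  intro u w x hu hw hx huw hwx hux
  exact f.map_adj_iff.mp
    (hB hu hw hx (f.map_adj_iff.mpr huw) (f.map_adj_iff.mpr hwx) (f.injective.ne hux))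

theorem not_unipolar_of_not_reachable_pathGraph (p q : pathGraph 3 ↪g G)
    (hpq : ∀ i j, ¬ G.Reachable (p i) (q j)) : ¬ Unipolar G := by
  rintro ⟨A, hA, hB⟩
  rw [isClusterSet_iff_forall_pathGraph_embedding] at hB
  obtain ⟨i, hi⟩ : ∃ i, p i ∈ A := by
    by_contra! h
    exact hB p (Set.range_subset_iff.mpr h)
  obtain ⟨j, hj⟩ : ∃ j, q j ∈ A := by
    by_contra! h
    exact hB q (Set.range_subset_iff.mpr h)
  refine hpq i j ?_
  by_cases h : p i = q j
  · exact h ▸ .rfl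
  · exact (hA hi hj h).reachable

theorem not_unipolar_twoP3 : ¬ Unipolar twoP3 :=
  not_unipolar_of_not_reachable_pathGraph Embedding.sumInl Embedding.sumInr
    not_reachable_sum_inl_inr

theorem Unipolar.of_induce_of_isClusterSet_compl {C : Set V}
    (hC : ∀ ⦃u v⦄, u ∈ C → G.Adj u v → v ∈ C) (hCu : Unipolar (G.induce C))
    (hCc : IsClusterSet G Cᶜ) : Unipolar G := by
  obtain ⟨A, hA, hB⟩ := hCu
  refine ⟨Subtype.val '' A, ?_, ?_⟩
  · rintro _ ⟨u, hu, rfl⟩ _ ⟨v, hv, rfl⟩ huv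
    exact hA hu hv (Subtype.coe_injective.ne_iff.mp huv)
  · intro u w x hu hw hx huw hwx hux
    by_cases hwC : w ∈ C
    · exact @hB ⟨u, hC hwC huw.symm⟩ ⟨w, hwC⟩ ⟨x, hC hwC hwx⟩
        (fun h => hu ⟨_, h, rfl⟩) (fun h => hw ⟨_, h, rfl⟩) (fun h => hx ⟨_, h, rfl⟩)
        huw hwx (Subtype.coe_injective.ne_iff.mp hux)
    · exact hCc (fun h => hwC (hC h huw)) hwC (fun h => hwC (hC h hwx.symm)) huw hwx hux

theorem nonempty_iso_of_embedding_of_not_unipolar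
    (hmin : ∀ s : Set V, s ≠ Set.univ → Unipolar (G.induce s)) (hH : ¬ Unipolar H)
    (e : H ↪g G) : Nonempty (G ≃g H) := by
  have hrange : Set.range e = Set.univ := by
    by_contra h
    exact hH ((hmin _ h).of_embedding e.isoInduceRange.toEmbedding)
  exact ⟨(RelIso.ofSurjective e (Set.range_eq_univ.mp hrange)).symm⟩

theorem MinUnipolarObstruction.of_iso (e : G ≃g H) (hH : MinUnipolarObstruction H) :
    MinUnipolarObstruction G := by
  refine ⟨fun h => hH.1 (h.of_embedding e.symm.toEmbedding), fun s hs => ?_⟩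
  have hes : e '' s ≠ Set.univ := by
    intro h
    rw [← Set.preimage_image_eq s e.injective, h, Set.preimage_univ] at hs
    exact hs rfl
  exact (hH.2 _ hes).of_embedding (e.induce e.injective.injOn.bijOn_image).toEmbedding

theorem unipolar_twoP3_induce_compl_singleton (v : Fin 3 ⊕ Fin 3) :
    Unipolar (twoP3.induce {v}ᶜ) := by
  -- the centre of the path not containing `v`
  refine ⟨{⟨Sum.elim (fun _ => .inr 1) (fun _ => .inl 1) v, by cases v <;> simp⟩},
    isClique_singleton _, ?_⟩
  rintro ⟨u, hu⟩ ⟨w, hw⟩ ⟨x, hx⟩ hu' hw' hx' huw hwx hux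
  simp only [Set.mem_compl_iff, Set.mem_singleton_iff, Subtype.mk.injEq, ne_eq, comap_adj,
    Function.Embedding.subtype_apply] at *
  rcases v with k | k <;> rcases u with a | a <;> rcases w with b | b <;> rcases x with c | c <;>
    simp_all [twoP3, pathGraph_adj, Fin.ext_iff] <;> omega

theorem minUnipolarObstruction_twoP3 : MinUnipolarObstruction twoP3 := by
  refine ⟨not_unipolar_twoP3, fun s hs => ?_⟩
  obtain ⟨v, hv⟩ := (Set.ne_univ_iff_exists_notMem s).mp hs
  exact (unipolar_twoP3_induce_compl_singleton v).of_embedding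
    (twoP3.induceHomOfLE (Set.subset_compl_singleton_iff.mpr hv))

theorem nonempty_iso_twoP3_of_minUnipolarObstruction (hG : ¬ G.Preconnected)
    (hGmin : MinUnipolarObstruction G) : Nonempty (G ≃g twoP3) := by
  obtain ⟨hnot, hmin⟩ := hGmin
  obtain hp | hp := isEmpty_or_nonempty (pathGraph 3 ↪g G)
  · exact absurd ⟨∅, G.isClique_empty,
      isClusterSet_iff_forall_pathGraph_embedding.mpr fun p => hp.elim p⟩ hnot
  obtain ⟨p⟩ := hp
  set C := {v | G.Reachable (p 1) v}
  have hC : C ≠ Set.univ := fun h => hG fun u v =>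
    (show u ∈ C from h ▸ trivial).symm.trans (show v ∈ C from h ▸ trivial)
  obtain ⟨q, hq⟩ : ∃ q : pathGraph 3 ↪g G, Set.range q ⊆ Cᶜ := by
    by_contra! h
    exact hnot (.of_induce_of_isClusterSet_compl (fun u v hu huv => hu.trans huv.reachable)
      (hmin C hC) (isClusterSet_iff_forall_pathGraph_embedding.mpr h))
  have hpq : ∀ i j, ¬ G.Reachable (p i) (q j) := fun i j h =>
    hq ⟨j, rfl⟩ ((((pathGraph_preconnected 3) 1 i).map p.toHom).trans h)
  exact nonempty_iso_of_embedding_of_not_unipolar hmin not_unipolar_twoP3 (p.sumElim q hpq)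

end Unipolar

theorem stmt_0_general {V : Type*} (G : SimpleGraph V) (hG : ¬ G.Preconnected) :
    MinUnipolarObstruction G ↔ Nonempty (G ≃g twoP3) :=
  ⟨nonempty_iso_twoP3_of_minUnipolarObstruction hG,
    fun ⟨e⟩ => minUnipolarObstruction_twoP3.of_iso e⟩

/-- If `G` is a disconnected finite simple graph, then `G` is a minimal unipolar
obstruction if and only if `G` is isomorphic to `2P_3`. -/
theorem stmt_0 {V : Type*} [Fintype V] (G : SimpleGraph V) (hG : ¬ G.Preconnected) :
    MinUnipolarObstruction G ↔ Nonempty (G ≃g twoP3) :=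
  stmt_0_general G hG
end

section
/- Let G = (S,K,R) be a spider (with possibly empty head R). Then G is unipolar if and only if R is empty or the induced subgraph G[R] is unipolar. -/
open SimpleGraph

universe u v

/-!
A unipolar partition of `G[R]` extends to one of `G` by adding the body `K` to the clique: every
head vertex sees all of `K`, and the legs `S` are independent and see no head vertex, so they
can join the cluster side. Conversely unipolarity passes to induced subgraphs, and for `R = ∅`
the graph `G[R]` is unipolar vacuously.
-/

section Unipolar

variable {V W : Type*} {G : SimpleGraph V} {H : SimpleGraph W}

theorem IsClusterSet.subset {B C : Set V} (hB : IsClusterSet G B) (h : C ⊆ B) :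
    IsClusterSet G C :=
  fun _ _ _ hu hw hx => hB (h hu) (h hw) (h hx)

theorem IsClusterSet.union {B C : Set V} (hB : IsClusterSet G B) (hC : IsClusterSet G C)
    (hBC : ∀ b ∈ B, ∀ c ∈ C, ¬ G.Adj b c) : IsClusterSet G (B ∪ C) := by
  rintro u w x (hu | hu) (hw | hw) (hx | hx) huw hwx hux
  · exact hB hu hw hx huw hwx hux
  · exact absurd hwx (hBC w hw x hx)
  · exact absurd huw (hBC u hu w hw)
  · exact absurd huw (hBC u hu w hw)
  · exact absurd huw.symm (hBC w hw u hu)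
  · exact absurd huw.symm (hBC w hw u hu)
  · exact absurd hwx.symm (hBC x hx w hw)
  · exact hC hu hw hx huw hwx hux

theorem IsIndepSet.isClusterSet {S : Set V} (hS : _root_.IsIndepSet G S) : IsClusterSet G S :=
  fun _ _ _ hu hw _ huw => absurd huw (hS hu hw)

theorem IsClusterSet.image (f : H ↪g G) {B : Set W} (hB : IsClusterSet H B) :
    IsClusterSet G (f '' B) := by
  rintro _ _ _ ⟨u, hu, rfl⟩ ⟨w, hw, rfl⟩ ⟨x, hx, rfl⟩ huw hwx hux
  exact f.map_adj_iff.2 <|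
    hB hu hw hx (f.map_adj_iff.1 huw) (f.map_adj_iff.1 hwx) (ne_of_apply_ne f hux)

theorem IsClusterSet.preimage (f : H ↪g G) {B : Set V} (hB : IsClusterSet G B) :
    IsClusterSet H (f ⁻¹' B) :=
  fun _ _ _ hu hw hx huw hwx hux => f.map_adj_iff.1 <|
    hB hu hw hx (f.map_adj_iff.2 huw) (f.map_adj_iff.2 hwx) (f.injective.ne hux)

theorem Unipolar.induce (s : Set V) (hG : Unipolar G) : Unipolar (G.induce s) :=
  hG.of_embedding (Embedding.induce s)

theorem unipolar_of_isEmpty [IsEmpty V] (G : SimpleGraph V) : Unipolar G :=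
  ⟨∅, by simp, fun u => isEmptyElim u⟩

theorem unipolar_of_unipolar_induce {S K R : Set V} (hcov : S ∪ K ∪ R = Set.univ)
    (hK : G.IsClique K) (hS : _root_.IsIndepSet G S) (hRK : ∀ r ∈ R, ∀ k ∈ K, G.Adj r k)
    (hRS : ∀ r ∈ R, ∀ s ∈ S, ¬ G.Adj r s) (hR : Unipolar (G.induce R)) : Unipolar G := by
  obtain ⟨A, hA, hC⟩ := hR
  refine ⟨Subtype.val '' A ∪ K, ?_, ?_⟩
  · rw [isClique_induce_iff] at hA
    have := G.symm
    refine (Set.pairwise_union_of_symm).2 ⟨hA, hK, ?_⟩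
    rintro _ ⟨r, -, rfl⟩ k hk -
    exact hRK r r.2 k hk
  · have hcompl : (Subtype.val '' A ∪ K)ᶜ ⊆ Subtype.val '' Aᶜ ∪ S := by
      intro v hv
      simp only [Set.mem_compl_iff, Set.mem_union, not_or] at hv
      have hv' : v ∈ S ∪ K ∪ R := hcov ▸ Set.mem_univ v
      rcases hv' with (hvS | hvK) | hvR
      · exact Or.inr hvS
      · exact absurd hvK hv.2
      · exact Or.inl ⟨⟨v, hvR⟩, fun hA => hv.1 ⟨_, hA, rfl⟩, rfl⟩
    refine ((hC.image (Embedding.induce R)).union hS.isClusterSet ?_).subset hcompl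
    rintro _ ⟨r, -, rfl⟩ s hs
    exact hRS r r.2 s hs

end Unipolar

theorem stmt_2_general {V : Type*} (G : SimpleGraph V) (S K R : Set V)
    (h : IsSpiderPartition G S K R) :
    Unipolar G ↔ R = ∅ ∨ Unipolar (G.induce R) := by
  obtain ⟨hcov, -, -, -, -, -, hK, hS, -, hRK, hRS⟩ := h
  have hempty : R = ∅ → Unipolar (G.induce R) := by
    rintro rfl
    exact unipolar_of_isEmpty _
  rw [or_iff_right_of_imp hempty]
  exact ⟨Unipolar.induce R, unipolar_of_unipolar_induce hcov hK hS hRK hRS⟩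

/-- A spider `G = (S, K, R)` is unipolar iff `R` is empty or `G[R]` is unipolar. -/
theorem stmt_2 {V : Type*} [Fintype V] (G : SimpleGraph V) (S K R : Set V)
    (h : IsSpiderPartition G S K R) :
    Unipolar G ↔ R = ∅ ∨ Unipolar (G.induce R) :=
  stmt_2_general G S K R h
end

section
/- For every integer s ≥ 2, each of the following seven graphs is a minimal (s,1)-polar obstruction: E1 = K_1 + 2K_2; E2 = 2P_3; E3 = C_4 + 2K_1; E7 = K_1 + complement(P_3 + K_2); E10 = K_1 + C_5; E11 = K_1 + P, where P is the banner graph (a four-cycle with one pendant vertex attached); and E12 = K_1 + complement(P_5). Consequently, these seven graphs are minimal (∞,1)-polar obstructions (minimal monopolar-complement obstructions). -/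
open SimpleGraph

universe u v

/-
Everything reduces to a finite check. On a vertex set `A`, the induced graph is complete
multipartite iff non-adjacency is transitive on `A`, and it is complete multipartite with at most
two parts iff every vertex of `A` is adjacent to exactly one end of each edge inside `A`. This makes
`(∞,1)`- and `(2,1)`-polarity decidable for finite graphs, and the kernel confirms that none of the
seven graphs is `(∞,1)`-polar while each of their vertex-deleted subgraphs is `(2,1)`-polar. As
`(2,1)`-polarity implies `(s,1)`-polarity for `s ≥ 2` and `(∞,1)`-polarity, and these properties
pass to induced subgraphs, both minimality statements follow.
-/

namespace SimpleGraph

variable {V W : Type*} {G : SimpleGraph V} {H : SimpleGraph W}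

instance [DecidableRel G.Adj] [DecidableRel H.Adj] :
    DecidableRel (G ⊕g H).Adj
  | .inl u, .inl v => inferInstanceAs (Decidable (G.Adj u v))
  | .inr u, .inr v => inferInstanceAs (Decidable (H.Adj u v))
  | .inl _, .inr _ => isFalse nofun
  | .inr _, .inl _ => isFalse nofun

instance (n : ℕ) : DecidableRel (pathGraph n).Adj :=
  fun _ _ => decidable_of_iff' _ pathGraph_adj

instance (n : ℕ) : DecidableRel (cycleGraph (n + 2)).Adj :=
  fun _ _ => decidable_of_iff' _ cycleGraph_adj

end SimpleGraph

instance (n : ℕ) : DecidableRel (KG n).Adj := by unfold KG; infer_instance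
instance (n : ℕ) : DecidableRel (EG n).Adj := by unfold EG; infer_instance
instance : DecidableRel banner.Adj := by unfold banner; infer_instance
instance : DecidableRel E1.Adj := by unfold E1; infer_instance
instance : DecidableRel E2.Adj := by unfold E2; infer_instance
instance : DecidableRel E3.Adj := by unfold E3; infer_instance
instance : DecidableRel E7.Adj := by unfold E7; infer_instance
instance : DecidableRel E10.Adj := by unfold E10; infer_instance
instance : DecidableRel E11.Adj := by unfold E11; infer_instance
instance : DecidableRel E12.Adj := by unfold E12; infer_instance

section Polarity

variable {V W : Type*} {G : SimpleGraph V} {H : SimpleGraph W} {A : Set V} {s t : ℕ}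

theorem isCompleteMultipartiteSet_iff :
    IsCompleteMultipartiteSet G A ↔
      ∀ u ∈ A, ∀ w ∈ A, ∀ x ∈ A, ¬G.Adj u w → ¬G.Adj w x → ¬G.Adj u x := by
  constructor
  · intro hA u hu w hw x hx huw hwx hux
    obtain rfl | huw' := eq_or_ne u w
    · exact hwx hux
    obtain rfl | hwx' := eq_or_ne w x
    · exact huw hux
    exact hA hu hw hx huw' hwx' hux.ne huw hwx hux
  · exact fun hA u w x hu hw hx _ _ _ => hA u hu w hw x hx

theorem isCompleteMultipartiteSetLE_two_iff :
    IsCompleteMultipartiteSetLE G 2 A ↔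
      ∀ u ∈ A, ∀ w ∈ A, ∀ x ∈ A, G.Adj u x → (G.Adj u w ↔ ¬G.Adj w x) := by
  constructor
  · rintro ⟨f, hf⟩ u hu w hw x hx hux
    rw [hf ⟨u, hu⟩ ⟨x, hx⟩] at hux
    rw [hf ⟨u, hu⟩ ⟨w, hw⟩, hf ⟨w, hw⟩ ⟨x, hx⟩]
    omega
  · intro hA
    rcases A.eq_empty_or_nonempty with rfl | ⟨a, ha⟩
    · exact ⟨fun u => absurd u.2 id, fun u => absurd u.2 id⟩
    classical
    -- the non-neighbours of `a` form one part, its neighbours the other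
    refine ⟨fun u => if G.Adj a u then 1 else 0, fun ⟨u, hu⟩ ⟨w, hw⟩ => ?_⟩
    by_cases hu' : G.Adj a u <;> by_cases hw' : G.Adj a w <;>
      simp only [hu', hw', if_true, if_false]
    · exact iff_of_false (fun huw => (hA a ha w hw u hu hu').1 hw' huw.symm) (by decide)
    · exact iff_of_true (not_not.1 ((hA a ha w hw u hu hu').not.1 hw')).symm (by decide)
    · exact iff_of_true (not_not.1 ((hA a ha u hu w hw hw').not.1 hu')) (by decide)
    · exact iff_of_false (fun huw => hu' ((hA u hu a ha w hw huw).2 hw').symm) (by decide)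

theorem SOnePolar.mono (hst : s ≤ t) : SOnePolar s G → SOnePolar t G := by
  rintro ⟨A, ⟨f, hf⟩, hB⟩
  refine ⟨A, ⟨fun u => Fin.castLE hst (f u), fun u w => ?_⟩, hB⟩
  rw [hf, (Fin.castLE_injective hst).ne_iff]

theorem SOnePolar.infOnePolar : SOnePolar s G → InfOnePolar G := by
  rintro ⟨A, ⟨f, hf⟩, hB⟩
  refine ⟨A, isCompleteMultipartiteSet_iff.2 fun u hu w hw x hx => ?_, hB⟩
  rw [hf ⟨u, hu⟩ ⟨w, hw⟩, hf ⟨w, hw⟩ ⟨x, hx⟩, hf ⟨u, hu⟩ ⟨x, hx⟩, not_not, not_not, not_not]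
  exact Eq.trans

theorem SOnePolar.comap (f : H ↪g G) : SOnePolar s G → SOnePolar s H := by
  rintro ⟨A, ⟨g, hg⟩, hB⟩
  refine ⟨f ⁻¹' A, ⟨fun u => g ⟨f u, u.2⟩, fun u w => ?_⟩, fun u hu w hw huw => ?_⟩
  · rw [← f.map_adj_iff]
    exact hg ⟨f u, u.2⟩ ⟨f w, w.2⟩
  · exact f.map_adj_iff.1 (hB hu hw (f.injective.ne huw))

theorem sOnePolar_induce_of_forall_compl_singleton (h : ∀ v, SOnePolar s (G.induce {v}ᶜ))
    {T : Set V} (hT : T ≠ Set.univ) : SOnePolar s (G.induce T) := by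
  obtain ⟨v, hv⟩ := (Set.ne_univ_iff_exists_notMem T).1 hT
  exact (h v).comap (induceHomOfLE G (Set.subset_compl_singleton_iff.2 hv))

theorem minObstructions_of_forall_compl_singleton (hG : ¬InfOnePolar G)
    (h : ∀ v, SOnePolar 2 (G.induce {v}ᶜ)) :
    (∀ s, 2 ≤ s → MinSOnePolarObstruction s G) ∧ MinInfOnePolarObstruction G :=
  ⟨fun _ hs => ⟨fun hG' => hG hG'.infOnePolar,
      fun _ hT => (sOnePolar_induce_of_forall_compl_singleton h hT).mono hs⟩,
    hG, fun _ hT => (sOnePolar_induce_of_forall_compl_singleton h hT).infOnePolar⟩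

variable [Fintype V]

theorem infOnePolar_iff_exists_finset :
    InfOnePolar G ↔ ∃ A : Finset V,
      (∀ u ∈ A, ∀ w ∈ A, ∀ x ∈ A, ¬G.Adj u w → ¬G.Adj w x → ¬G.Adj u x) ∧
        ∀ u ∉ A, ∀ w ∉ A, u ≠ w → G.Adj u w := by
  constructor
  · rintro ⟨A, hA, hB⟩
    classical
    refine ⟨A.toFinset, ?_, fun u hu w hw => hB (by simpa using hu) (by simpa using hw)⟩
    simpa only [Set.mem_toFinset] using isCompleteMultipartiteSet_iff.1 hA
  · rintro ⟨A, hA, hB⟩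
    exact ⟨A, isCompleteMultipartiteSet_iff.2 hA, fun u hu w hw => hB u hu w hw⟩

theorem sOnePolar_two_iff_exists_finset :
    SOnePolar 2 G ↔ ∃ A : Finset V,
      (∀ u ∈ A, ∀ w ∈ A, ∀ x ∈ A, G.Adj u x → (G.Adj u w ↔ ¬G.Adj w x)) ∧
        ∀ u ∉ A, ∀ w ∉ A, u ≠ w → G.Adj u w := by
  simp only [SOnePolar, isCompleteMultipartiteSetLE_two_iff]
  constructor
  · rintro ⟨A, hA, hB⟩
    classical
    refine ⟨A.toFinset, ?_, fun u hu w hw => hB (by simpa using hu) (by simpa using hw)⟩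
    simpa only [Set.mem_toFinset] using hA
  · rintro ⟨A, hA, hB⟩
    exact ⟨A, hA, fun u hu w hw => hB u hu w hw⟩

instance [DecidableEq V] [DecidableRel G.Adj] : Decidable (InfOnePolar G) :=
  decidable_of_iff _ infOnePolar_iff_exists_finset.symm

instance [DecidableEq V] [DecidableRel G.Adj] : Decidable (SOnePolar 2 G) :=
  decidable_of_iff _ sOnePolar_two_iff_exists_finset.symm

end Polarity

/-- For every integer `s ≥ 2`, each of `E1, E2, E3, E7, E10, E11, E12` is a
minimal `(s,1)`-polar obstruction; consequently, each is a minimal `(∞,1)`-polar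
obstruction. -/
theorem stmt_6 :
    (∀ s : ℕ, 2 ≤ s →
      (MinSOnePolarObstruction s E1 ∧
        MinSOnePolarObstruction s E2 ∧
        MinSOnePolarObstruction s E3 ∧
        MinSOnePolarObstruction s E7 ∧
        MinSOnePolarObstruction s E10 ∧
        MinSOnePolarObstruction s E11 ∧
        MinSOnePolarObstruction s E12)) ∧
    (MinInfOnePolarObstruction E1 ∧
      MinInfOnePolarObstruction E2 ∧
      MinInfOnePolarObstruction E3 ∧
      MinInfOnePolarObstruction E7 ∧
      MinInfOnePolarObstruction E10 ∧
      MinInfOnePolarObstruction E11 ∧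
      MinInfOnePolarObstruction E12) := by
  obtain ⟨h1, i1⟩ := minObstructions_of_forall_compl_singleton (G := E1)
    (by decide +kernel) (by decide +kernel)
  obtain ⟨h2, i2⟩ := minObstructions_of_forall_compl_singleton (G := E2)
    (by decide +kernel) (by decide +kernel)
  obtain ⟨h3, i3⟩ := minObstructions_of_forall_compl_singleton (G := E3)
    (by decide +kernel) (by decide +kernel)
  obtain ⟨h7, i7⟩ := minObstructions_of_forall_compl_singleton (G := E7)
    (by decide +kernel) (by decide +kernel)
  obtain ⟨h10, i10⟩ := minObstructions_of_forall_compl_singleton (G := E10)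
    (by decide +kernel) (by decide +kernel)
  obtain ⟨h11, i11⟩ := minObstructions_of_forall_compl_singleton (G := E11)
    (by decide +kernel) (by decide +kernel)
  obtain ⟨h12, i12⟩ := minObstructions_of_forall_compl_singleton (G := E12)
    (by decide +kernel) (by decide +kernel)
  exact ⟨fun s hs => ⟨h1 s hs, h2 s hs, h3 s hs, h7 s hs, h10 s hs, h11 s hs, h12 s hs⟩,
    i1, i2, i3, i7, i10, i11, i12⟩
end

section
/- Let s ≥ 2 be an integer and let H be a connected finite simple graph. If the disjoint union G = K_2 + H is a minimal (s,1)-polar obstruction and G is not isomorphic to 2K_{s+1}, then H is isomorphic to the join 2K_1 ⊕ K_s. -/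
open SimpleGraph

universe u v

/-! Deleting a vertex `z` of `H` from the obstruction `K₂ + H` leaves an `(s,1)`-polar graph, and
`K₂ + H'` is `(s,1)`-polar exactly when `H'` is complete multipartite with at most `s` parts or
complete. So every `H - z` is complete multipartite, and since `H` is connected this forces
non-adjacency to be transitive on `H` itself. A non-adjacent pair `x, y` (which exists, `H` not
being complete) are then twins, so `H - x` cannot have an `s`-part structure (it would extend to
`H`) and must be complete: `H` is a complete graph `K_{n+2}` minus the edge `xy`, i.e.
`2K₁ ⊕ K_n`. This graph has `n + 1` parts, so `n ≥ s`, and if `n > s` it properly contains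
`2K₁ ⊕ K_s`, whose sum with `K₂` is still not `(s,1)`-polar, against minimality. -/

open Function

def IsCompleteMultipartiteLE {V : Type*} (G : SimpleGraph V) (s : ℕ) : Prop :=
  ∃ f : V → Fin s, ∀ u w, G.Adj u w ↔ f u ≠ f w

section Multipartite

variable {V V' : Type*} {G : SimpleGraph V} {G' : SimpleGraph V'} {s : ℕ}

theorem IsCompleteMultipartiteLE.of_adj_iff (h : IsCompleteMultipartiteLE G s) (r : V' → V)
    (hr : ∀ u w, G'.Adj u w ↔ G.Adj (r u) (r w)) : IsCompleteMultipartiteLE G' s := by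
  obtain ⟨f, hf⟩ := h
  exact ⟨f ∘ r, fun u w => (hr u w).trans (hf _ _)⟩

theorem IsCompleteMultipartiteLE.of_embedding (h : IsCompleteMultipartiteLE G s) (φ : G' ↪g G) :
    IsCompleteMultipartiteLE G' s :=
  h.of_adj_iff φ fun _ _ => φ.map_adj_iff.symm

theorem IsCompleteMultipartiteLE.isCompleteMultipartite (h : IsCompleteMultipartiteLE G s) :
    G.IsCompleteMultipartite := by
  obtain ⟨f, hf⟩ := h
  refine ⟨fun u v w huv hvw => ?_⟩
  simp only [hf, not_not] at *
  exact huv.trans hvw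

theorem IsCompleteMultipartiteLE.of_induce_compl_singleton {x y : V}
    (h : IsCompleteMultipartiteLE (G.induce {x}ᶜ) s) (hyx : y ≠ x)
    (htwin : ∀ w, G.Adj x w ↔ G.Adj y w) : IsCompleteMultipartiteLE G s := by
  classical
  refine h.of_adj_iff (fun v => if hv : v = x then ⟨y, hyx⟩ else ⟨v, hv⟩) fun u w => ?_
  by_cases hu : u = x <;> by_cases hw : w = x
  · simp [hu, hw]
  · simp [hu, hw, htwin]
  · simpa [hu, hw, G.adj_comm u] using htwin u
  · simp [hu, hw]

end Multipartite

namespace SimpleGraph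

variable {V : Type*} {G : SimpleGraph V}

theorem top_isCompleteMultipartite : (⊤ : SimpleGraph V).IsCompleteMultipartite :=
  ⟨fun u v w huv hvw => by simp_all⟩

theorem IsCompleteMultipartite.adj_iff_adj_of_not_adj (h : G.IsCompleteMultipartite) {x y : V}
    (hxy : ¬ G.Adj x y) (w : V) : G.Adj x w ↔ G.Adj y w := by
  constructor
  · intro hxw
    by_contra hyw
    exact h.trans x y w hxy hyw hxw
  · intro hyw
    by_contra hxw
    exact h.trans y x w (by rwa [adj_comm]) hxw hyw

theorem Connected.isCompleteMultipartite_of_forall_induce_compl (hG : G.Connected)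
    (h : ∀ z, (G.induce {z}ᶜ).IsCompleteMultipartite) : G.IsCompleteMultipartite := by
  by_contra hG'
  obtain ⟨v, w₁, w₂, h3⟩ := exists_isPathGraph3Compl_of_not_isCompleteMultipartite hG'
  by_cases hz : ∃ z, z ≠ v ∧ z ≠ w₁ ∧ z ≠ w₂
  · obtain ⟨z, hv, h₁, h₂⟩ := hz
    exact not_isCompleteMultipartite_iff_exists_isPathGraph3Compl.2
      ⟨⟨v, hv.symm⟩, ⟨w₁, h₁.symm⟩, ⟨w₂, h₂.symm⟩, h3.adj, h3.not_adj_fst, h3.not_adj_snd⟩ (h z)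
  · push Not at hz
    have : Nontrivial V := ⟨⟨v, w₁, h3.ne_fst⟩⟩
    obtain ⟨u, hu⟩ := hG.preconnected.exists_adj_of_nontrivial v
    by_cases huv : u = v
    · exact hu.ne huv.symm
    by_cases hu₁ : u = w₁
    · exact h3.not_adj_fst (hu₁ ▸ hu)
    · exact h3.not_adj_snd (hz u huv hu₁ ▸ hu)

theorem adj_iff_of_induce_compl_singleton_eq_top {x y : V} (h : G.induce {x}ᶜ = ⊤) (hxy : x ≠ y)
    (htwin : ∀ w, G.Adj x w ↔ G.Adj y w) (u w : V) :
    G.Adj u w ↔ u ≠ w ∧ ¬((u = x ∨ u = y) ∧ (w = x ∨ w = y)) := by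
  have hoff : ∀ u w, u ≠ x → w ≠ x → u ≠ w → G.Adj u w := fun u w hu hw huw =>
    show (G.induce {x}ᶜ).Adj ⟨u, hu⟩ ⟨w, hw⟩ by
      rw [h, top_adj]
      exact fun e => huw (congrArg Subtype.val e)
  have hx : ∀ w, w ≠ x → w ≠ y → G.Adj x w := fun w hwx hwy =>
    (htwin w).2 (hoff y w hxy.symm hwx (Ne.symm hwy))
  have hnxy : ¬ G.Adj x y := by simpa using htwin y
  constructor
  · intro huw
    refine ⟨huw.ne, ?_⟩
    rintro ⟨rfl | rfl, rfl | rfl⟩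
    exacts [huw.ne rfl, hnxy huw, hnxy huw.symm, huw.ne rfl]
  · rintro ⟨huw, hpair⟩
    by_cases hu : u = x
    · subst hu
      exact hx w (Ne.symm huw) fun hw => hpair ⟨Or.inl rfl, Or.inr hw⟩
    by_cases hw : w = x
    · subst hw
      exact (hx u hu fun hu' => hpair ⟨Or.inr hu', Or.inl rfl⟩).symm
    exact hoff u w hu hw huw

def Embedding.joinG {α α' β β' : Type*} {G : SimpleGraph α} {G' : SimpleGraph α'}
    {H : SimpleGraph β} {H' : SimpleGraph β'} (f : G ↪g G') (g : H ↪g H') :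
    _root_.joinG G H ↪g _root_.joinG G' H' where
  toFun := Sum.map f g
  inj' := Sum.map_injective.2 ⟨f.injective, g.injective⟩
  map_rel_iff' {u v} := by cases u <;> cases v <;> simp [_root_.joinG]

end SimpleGraph

section Polar

variable {U V V' : Type*} {K : SimpleGraph U} {G : SimpleGraph V} {G' : SimpleGraph V'} {s : ℕ}

theorem SOnePolar.of_embedding (h : SOnePolar s G) (φ : G' ↪g G) : SOnePolar s G' := by
  obtain ⟨A, ⟨f, hf⟩, hB⟩ := h
  refine ⟨φ ⁻¹' A, ⟨fun u => f ⟨φ u, u.2⟩, fun u w => ?_⟩, ?_⟩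
  · simpa using hf ⟨φ u, u.2⟩ ⟨φ w, w.2⟩
  · intro u hu w hw huw
    exact φ.map_adj_iff.1 (hB hu hw (φ.injective.ne huw))

theorem MinSOnePolarObstruction.sOnePolar_of_embedding (h : MinSOnePolarObstruction s G)
    (φ : G' ↪g G) (hφ : ¬ Surjective φ) : SOnePolar s G' :=
  (h.2 _ (by rwa [Ne, Set.range_eq_univ])).of_embedding φ.isoInduceRange.toEmbedding

theorem MinSOnePolarObstruction.sOnePolar_sum_of_embedding
    (h : MinSOnePolarObstruction s (K ⊕g G)) (φ : G' ↪g G) (hφ : ¬ Surjective φ) :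
    SOnePolar s (K ⊕g G') := by
  refine h.sOnePolar_of_embedding (Embedding.sum (Embedding.refl) φ) fun hsurj => hφ fun v => ?_
  obtain ⟨u | u, hu⟩ := hsurj (Sum.inr v)
  · simp at hu
  · exact ⟨u, by simpa using hu⟩

theorem sOnePolar_KG_two_sum_iff (hs : 2 ≤ s) :
    SOnePolar s (KG 2 ⊕g G) ↔ IsCompleteMultipartiteLE G s ∨ G = ⊤ := by
  constructor
  · rintro ⟨A, ⟨f, hf⟩, hB⟩
    by_cases hA : ∃ i, (Sum.inl i : Fin 2 ⊕ V) ∉ A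
    · obtain ⟨i, hi⟩ := hA
      have hinr : ∀ v, (Sum.inr v : Fin 2 ⊕ V) ∈ A := fun v => by
        by_contra hv
        simpa using hB hi hv (by simp)
      exact Or.inl ⟨fun v => f ⟨_, hinr v⟩, fun u w => by simpa using hf ⟨_, hinr u⟩ ⟨_, hinr w⟩⟩
    · push Not at hA
      have h01 : f ⟨_, hA 0⟩ ≠ f ⟨_, hA 1⟩ := (hf _ _).1 (by simp [KG])
      have hinr : ∀ v, (Sum.inr v : Fin 2 ⊕ V) ∉ A := fun v hv => by
        have h0 := (hf ⟨_, hA 0⟩ ⟨_, hv⟩).not.1 (by simp)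
        have h1 := (hf ⟨_, hA 1⟩ ⟨_, hv⟩).not.1 (by simp)
        exact h01 ((not_ne_iff.1 h0).trans (not_ne_iff.1 h1).symm)
      exact Or.inr (eq_top_iff.2 fun u w huw => by
        simpa using hB (hinr u) (hinr w) (by simpa using huw))
  · rintro (⟨f, hf⟩ | rfl)
    · refine ⟨Set.range Sum.inr, ⟨fun u => Sum.elim (fun i => Fin.castLE hs i) f u.1, ?_⟩, ?_⟩
      · rintro ⟨_, u, rfl⟩ ⟨_, w, rfl⟩
        simpa using hf u w
      · rintro (i | u) hi (j | w) hj hij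
        · simpa [KG] using hij
        all_goals simp_all
    · refine ⟨Set.range Sum.inl,
        ⟨fun u => Sum.elim (fun i => Fin.castLE hs i) (fun _ => ⟨0, by omega⟩) u.1, ?_⟩, ?_⟩
      · rintro ⟨_, i, rfl⟩ ⟨_, j, rfl⟩
        simp [KG, Fin.ext_iff]
      · rintro (i | u) hi (j | w) hj hij
        all_goals simp_all

end Polar

section Join

variable {V : Type*} {s m n : ℕ}

theorem nonempty_iso_joinG_of_adj_iff [Fintype V] {G : SimpleGraph V} (p : V → Prop)
    [DecidablePred p] (hG : ∀ u w, G.Adj u w ↔ u ≠ w ∧ ¬(p u ∧ p w))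
    (hm : Fintype.card {v // p v} = m) (hn : Fintype.card {v // ¬p v} = n) :
    Nonempty (G ≃g joinG (EG m) (KG n)) := by
  let e : V ≃ Fin m ⊕ Fin n := (Equiv.sumCompl p).symm.trans
    (Equiv.sumCongr (Fintype.equivFinOfCardEq hm) (Fintype.equivFinOfCardEq hn))
  refine ⟨⟨e, fun {u w} => ?_⟩⟩
  rw [hG]
  by_cases hu : p u <;> by_cases hw : p w
  · simp [e, joinG, EG, hu, hw]
  · simpa [e, joinG, hu, hw] using fun h : u = w => hw (h ▸ hu)
  · simpa [e, joinG, hu, hw] using fun h : u = w => hu (h ▸ hw)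
  · simp [e, joinG, KG, hu, hw]

theorem isCompleteMultipartiteLE_joinG_iff :
    IsCompleteMultipartiteLE (joinG (EG 2) (KG m)) s ↔ m < s := by
  constructor
  · rintro ⟨f, hf⟩
    have hinj : Injective (Fin.cons (f (Sum.inl 0)) (f ∘ Sum.inr) : Fin (m + 1) → Fin s) := by
      refine Fin.cons_injective_iff.2 ⟨?_, fun i j hij => ?_⟩
      · rintro ⟨j, hj⟩
        exact (hf _ _).1 (by simp [joinG]) hj.symm
      · by_contra hne
        exact (hf _ _).1 (by simpa [joinG, KG] using hne) hij
    simpa using Fintype.card_le_of_injective _ hinj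
  · intro hms
    refine ⟨fun p => Fin.castLE hms (Sum.elim (fun _ => 0) Fin.succ p), ?_⟩
    rintro (i | i) (j | j) <;> simp [joinG, EG, KG, Fin.ext_iff]

theorem joinG_EG_two_ne_top : joinG (EG 2) (KG m) ≠ ⊤ := by
  intro h
  have : (joinG (EG 2) (KG m)).Adj (Sum.inl 0) (Sum.inl 1) := by simp [h]
  simp [joinG, EG] at this

theorem sOnePolar_KG_two_sum_joinG_iff (hs : 2 ≤ s) :
    SOnePolar s (KG 2 ⊕g joinG (EG 2) (KG m)) ↔ m < s := by
  simp [sOnePolar_KG_two_sum_iff hs, isCompleteMultipartiteLE_joinG_iff, joinG_EG_two_ne_top]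

end Join

theorem stmt_8_general {W : Type*} [Fintype W] (s : ℕ) (hs : 2 ≤ s) (H : SimpleGraph W)
    (hH : H.Connected)
    (hobs : MinSOnePolarObstruction s (KG 2 ⊕g H)) :
    Nonempty (H ≃g joinG (EG 2) (KG s)) := by
  classical
  have hdel : ∀ z, IsCompleteMultipartiteLE (H.induce {z}ᶜ) s ∨ H.induce {z}ᶜ = ⊤ := fun z =>
    (sOnePolar_KG_two_sum_iff hs).1 <| hobs.sOnePolar_sum_of_embedding (Embedding.induce _)
      fun hz => by simpa using hz z
  obtain ⟨hcol, htop⟩ := not_or.1 <| (sOnePolar_KG_two_sum_iff hs).not.1 hobs.1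
  obtain ⟨x, y, hxy, hnadj⟩ : ∃ x y, x ≠ y ∧ ¬ H.Adj x y := by
    by_contra! h
    exact htop (eq_top_iff.2 fun u w => h u w)
  have htwin := (hH.isCompleteMultipartite_of_forall_induce_compl fun z => (hdel z).elim
    (·.isCompleteMultipartite) fun h => h ▸ top_isCompleteMultipartite).adj_iff_adj_of_not_adj hnadj
  have hadj := adj_iff_of_induce_compl_singleton_eq_top
    ((hdel x).resolve_left fun h => hcol (h.of_induce_compl_singleton hxy.symm htwin)) hxy htwin
  obtain ⟨e⟩ := nonempty_iso_joinG_of_adj_iff (· ∈ ({x, y} : Finset W)) (by simpa using hadj)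
    (by rw [Fintype.card_coe, Finset.card_pair hxy]) rfl
  set n := Fintype.card {v // v ∉ ({x, y} : Finset W)}
  have hcard : Fintype.card W = 2 + n := by simpa using Fintype.card_congr e.toEquiv
  obtain rfl : n = s := by
    refine le_antisymm (not_lt.1 fun hsn => ?_) (not_lt.1 fun hns =>
      hcol ((isCompleteMultipartiteLE_joinG_iff.2 hns).of_embedding e.toEmbedding))
    have hJs := hobs.sOnePolar_sum_of_embedding (e.symm.toEmbedding.comp
      (Embedding.joinG (Embedding.refl) (Embedding.completeGraph (Fin.castLEEmb hsn.le))))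
      fun hsurj => hsn.not_ge (by simpa [hcard] using Fintype.card_le_of_surjective _ hsurj)
    exact lt_irrefl s ((sOnePolar_KG_two_sum_joinG_iff hs).1 hJs)
  exact ⟨e⟩

/-- For `s ≥ 2` and `H` connected, if `G = K_2 + H` is a minimal `(s,1)`-polar
obstruction not isomorphic to `2K_{s+1}`, then `H ≅ 2K_1 ⊕ K_s`. -/
theorem stmt_8 {W : Type*} [Fintype W] (s : ℕ) (hs : 2 ≤ s) (H : SimpleGraph W)
    (hH : H.Connected)
    (hobs : MinSOnePolarObstruction s (KG 2 ⊕g H))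
    (hne : ¬ Nonempty ((KG 2 ⊕g H) ≃g (KG (s + 1) ⊕g KG (s + 1)))) :
    Nonempty (H ≃g joinG (EG 2) (KG s)) :=
  stmt_8_general s hs H hH hobs
end
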